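/- The free rack FR_n on n generators has HR_0 ≅ ℤ, HR_1 ≅ ℤ^n, and HR_m = 0 for m ≥ 2. -/

import Mathlib

/-- Rack chains: free abelian group on `n`-tuples. -/
abbrev CR (X : Type) (n : ℕ) : Type := (Fin n → X) →₀ ℤ

/-- The monomial basis element. -/
noncomputable def mon {X : Type} {n : ℕ} (w : Fin n → X) : CR X n := Finsupp.single w 1

/-- Delete the `(i+1)`-st entry (1-indexed `k = i+1`). -/
def del {X : Type} {n : ℕ} (w : Fin (n+1) → X) (i : Fin n) : Fin n → X :=
  fun j => if (j : ℕ) < (i : ℕ) then w j.castSucc else w j.succ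

/-- Delete the `(i+1)`-st entry and act with it on all later entries. -/
def act {X : Type} (op : X → X → X) {n : ℕ} (w : Fin (n+1) → X) (i : Fin n) : Fin n → X :=
  fun j => if (j : ℕ) < (i : ℕ) then w j.castSucc else op (w i.castSucc) (w j.succ)

/-- Rack differential on a monomial. -/
noncomputable def dMon {X : Type} (op : X → X → X) {n : ℕ} (w : Fin (n+1) → X) : CR X n :=
  ∑ i : Fin n, ((-1 : ℤ) ^ (i : ℕ)) • (mon (del w i) - mon (act op w i))

/-- The rack differential `CR_{n+1} → CR_n`. -/
noncomputable def d {X : Type} (op : X → X → X) (n : ℕ) : CR X (n+1) →+ CR X n :=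
  Finsupp.liftAddHom fun w => zmultiplesHom _ (dMon op w)

/-- Left concatenation `w ↦ x·w`. -/
noncomputable def consHom {X : Type} (x : X) (n : ℕ) : CR X n →+ CR X (n+1) :=
  Finsupp.liftAddHom fun w => zmultiplesHom _ (mon (Fin.cons x w))

/-- Diagonal action of a map `φ` on chains. -/
noncomputable def mapChains {X : Type} (φ : X → X) (n : ℕ) : CR X n →+ CR X n :=
  Finsupp.liftAddHom fun w => zmultiplesHom _ (mon (φ ∘ w))

/-- Cycles. -/
noncomputable def ZC {X : Type} (op : X → X → X) : (n : ℕ) → AddSubgroup (CR X n)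
  | 0 => ⊤
  | (m+1) => (d op m).ker

/-- Boundaries. -/
noncomputable def BC {X : Type} (op : X → X → X) (n : ℕ) : AddSubgroup (CR X n) :=
  (d op n).range

/-- Rack homology. -/
abbrev HR (X : Type) (op : X → X → X) (n : ℕ) : Type :=
  ZC op n ⧸ ((BC op n).addSubgroupOf (ZC op n))

/-- The rack operation of a permutation rack. -/
def permOp {X : Type} (φ : X ≃ X) : X → X → X := fun _ y => φ y

/-- Multiplication by an element of `ℤX`. -/
noncomputable def mulChain {X : Type} (v : X →₀ ℤ) (n : ℕ) : CR X n →+ CR X (n+1) :=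
  ∑ x ∈ v.support, v x • consHom x n

/-- The free rack on `n` generators, modelled on `F_n × {x₁,…,x_n}` with
`(u,x) ▷ (w,y) = (uxu⁻¹w, y)`. -/
def freeRackOp (n : ℕ) :
    (FreeGroup (Fin n) × Fin n) → (FreeGroup (Fin n) × Fin n) → (FreeGroup (Fin n) × Fin n) :=
  fun p q => (p.1 * FreeGroup.of p.2 * p.1⁻¹ * q.1, q.2)

/-!
The free group `F` acts freely on `FR n` by left translation (`lmul`), through rack automorphisms,
and the rack operation of `(u, xₜ)` is translation by `u xₜ u⁻¹`; hence
`d((1, xₜ) · c) = c − xₜ c − (1, xₜ) · d c`. Since `(u, xₜ) · w` and `(1, xₜ) · u⁻¹w` differ by a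
translate minus the original, every chain of positive degree splits as
`c = ∑ₜ (1, xₜ) · νₜ(c) + θ(v)` with `ν = splitHead` and `θ(γ) = ∑ₜ (γₜ − xₜ γₜ)` (`genBoundary`).
In positive degrees `θ` is injective: the augmentation ideal of `ℤ[F]` is free on the `xₜ − 1`,
by a longest-reduced-word argument. For a cycle `z` of degree at least two, applying `d` to its
splitting and cancelling `θ` gives `d v = −ν(z)`, whence `z = d(∑ₜ (1, xₜ) · vₜ)`. In degree one
the same splitting identifies `C₁ / im d` with `ℤⁿ` through `ν`.
-/

section RackChains

variable {A : Type} (op : A → A → A) {m : ℕ}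

lemma chainHom_ext {N : Type*} [AddCommGroup N] {f g : CR A m →+ N}
    (h : ∀ w : Fin m → A, f (mon w) = g (mon w)) : f = g :=
  Finsupp.addHom_ext fun w z => by
    rw [← mul_one z, ← smul_eq_mul, ← Finsupp.smul_single, map_zsmul, map_zsmul]
    exact congrArg (z • ·) (h w)

lemma map_mem_of_forall_mon {N : Type*} [AddCommGroup N] (f : CR A m →+ N) {S : AddSubgroup N}
    (h : ∀ w : Fin m → A, f (mon w) ∈ S) (c : CR A m) : f c ∈ S := by
  induction c using Finsupp.induction_linear with
  | zero => simp
  | add c c' hc hc' => simpa using S.add_mem hc hc'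
  | single w z =>
    rw [← mul_one z, ← smul_eq_mul, ← Finsupp.smul_single, map_zsmul]
    exact S.zsmul_mem (h w) z

lemma d_mon (w : Fin (m+1) → A) : d op m (mon w) = dMon op w := by
  simp [d, mon]

lemma consHom_mon (x : A) (w : Fin m → A) : consHom x m (mon w) = mon (Fin.cons x w) := by
  simp [consHom, mon]

lemma mapChains_mon (φ : A → A) (w : Fin m → A) : mapChains φ m (mon w) = mon (φ ∘ w) := by
  simp [mapChains, mon]

lemma mapChains_eq_mapDomain (φ : A → A) (c : CR A m) :
    mapChains φ m c = Finsupp.mapDomain (φ ∘ ·) c := by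
  have : mapChains φ m = Finsupp.mapDomain.addMonoidHom (φ ∘ · : (Fin m → A) → Fin m → A) :=
    chainHom_ext fun w => by rw [mapChains_mon]; simp [mon]
  rw [this, Finsupp.mapDomain.addMonoidHom_apply]

lemma mapChains_comp (φ ψ : A → A) (c : CR A m) :
    mapChains φ m (mapChains ψ m c) = mapChains (φ ∘ ψ) m c := by
  simp only [mapChains_eq_mapDomain, ← Finsupp.mapDomain_comp]
  rfl

lemma mapChains_id (c : CR A m) : mapChains id m c = c := by
  rw [mapChains_eq_mapDomain]
  exact Finsupp.mapDomain_id

lemma del_cons_zero (x : A) (w : Fin (m+1) → A) : del (Fin.cons x w) (0 : Fin (m+1)) = w := by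
  funext j; simp [del]

lemma act_cons_zero (x : A) (w : Fin (m+1) → A) :
    act op (Fin.cons x w) (0 : Fin (m+1)) = op x ∘ w := by
  funext j; simp [act]

lemma del_cons_succ (x : A) (w : Fin (m+1) → A) (i : Fin m) :
    del (Fin.cons x w) i.succ = Fin.cons x (del w i) := by
  funext j
  cases j using Fin.cases with
  | zero => simp [del]
  | succ j =>
    simp only [del, Fin.val_succ, Fin.cons_succ, add_lt_add_iff_right]
    split_ifs <;> simp

lemma act_cons_succ (x : A) (w : Fin (m+1) → A) (i : Fin m) :
    act op (Fin.cons x w) i.succ = Fin.cons x (act op w i) := by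
  funext j
  cases j using Fin.cases with
  | zero => simp [act]
  | succ j =>
    simp only [act, Fin.val_succ, Fin.cons_succ, add_lt_add_iff_right]
    split_ifs <;> simp

lemma dMon_cons (x : A) (w : Fin (m+1) → A) :
    dMon op (Fin.cons x w) = mon w - mon (op x ∘ w) - consHom x m (dMon op w) := by
  rw [dMon, Fin.sum_univ_succ, del_cons_zero, act_cons_zero, dMon, map_sum]
  simp only [Fin.val_zero, pow_zero, one_smul, Fin.val_succ, pow_succ, mul_neg_one, neg_smul,
    del_cons_succ, act_cons_succ, map_zsmul, sub_eq_add_neg, map_add, map_neg, consHom_mon,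
    Finset.sum_neg_distrib]

lemma d_consHom (x : A) (c : CR A (m+1)) :
    d op (m+1) (consHom x (m+1) c) = c - mapChains (op x) (m+1) c - consHom x m (d op m c) := by
  have : (d op (m+1)).comp (consHom x (m+1))
      = AddMonoidHom.id _ - mapChains (op x) (m+1) - (consHom x m).comp (d op m) :=
    chainHom_ext fun w => by
      simp [consHom_mon, d_mon, dMon_cons, mapChains_mon]
  exact DFunLike.congr_fun this c

lemma d_zero : d op 0 = 0 :=
  chainHom_ext fun w => by simp [d_mon, dMon]

variable {φ : A → A}

lemma dMon_comp (hφ : ∀ a b, op (φ a) (φ b) = φ (op a b)) (w : Fin (m+1) → A) :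
    dMon op (φ ∘ w) = mapChains φ m (dMon op w) := by
  have hdel : ∀ i, del (φ ∘ w) i = φ ∘ del w i := fun i => by
    funext j; simp only [del, Function.comp]; split_ifs <;> rfl
  have hact : ∀ i, act op (φ ∘ w) i = φ ∘ act op w i := fun i => by
    funext j; simp only [act, Function.comp]; split_ifs <;> simp [hφ]
  simp [dMon, map_sum, mapChains_mon, hdel, hact]

lemma d_mapChains (hφ : ∀ a b, op (φ a) (φ b) = φ (op a b)) (c : CR A (m+1)) :
    d op m (mapChains φ (m+1) c) = mapChains φ m (d op m c) := by
  have : (d op m).comp (mapChains φ (m+1)) = (mapChains φ m).comp (d op m) :=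
    chainHom_ext fun w => by simp [mapChains_mon, d_mon, dMon_comp op hφ]
  exact DFunLike.congr_fun this c

end RackChains

section Homology

variable {A : Type} (op : A → A → A)

noncomputable def hrEquivOfSurjective {H : Type*} [AddCommGroup H] {m : ℕ} (hZ : ZC op m = ⊤)
    (π : CR A m →+ H) (hπ : Function.Surjective π) (hker : π.ker = BC op m) : HR A op m ≃+ H :=
  let φ : ZC op m →+ H := π.comp (ZC op m).subtype
  have hφker : φ.ker = (BC op m).addSubgroupOf (ZC op m) := by
    ext x
    simp [φ, AddSubgroup.mem_addSubgroupOf, ← hker]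
  have hφ : Function.Surjective φ := fun h =>
    let ⟨c, hc⟩ := hπ h
    ⟨⟨c, hZ ▸ AddSubgroup.mem_top c⟩, hc⟩
  (QuotientAddGroup.quotientAddEquivOfEq hφker.symm).trans
    (QuotientAddGroup.quotientKerEquivOfSurjective φ hφ)

lemma ZC_one_eq_top : ZC op 1 = ⊤ := by
  simp [ZC, d_zero]

lemma BC_zero_eq_bot : BC op 0 = ⊥ := by
  simp [BC, d_zero]

noncomputable def chainsZeroEquiv : CR A 0 ≃+ ℤ := Finsupp.uniqueAddEquiv Fin.elim0

noncomputable def hrZeroEquiv : HR A op 0 ≃+ ℤ :=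
  hrEquivOfSurjective op rfl chainsZeroEquiv.toAddMonoidHom chainsZeroEquiv.surjective
    (by rw [BC_zero_eq_bot, AddMonoidHom.ker_eq_bot_iff]; exact chainsZeroEquiv.injective)

lemma subsingleton_HR_succ {m : ℕ} (h : ∀ z : CR A (m+1), d op m z = 0 → z ∈ BC op (m+1)) :
    Subsingleton (HR A op (m+1)) := by
  constructor
  intro a b
  induction a using QuotientAddGroup.induction_on with | H x =>
  induction b using QuotientAddGroup.induction_on with | H y =>
  rw [QuotientAddGroup.eq, AddSubgroup.mem_addSubgroupOf]
  exact h _ (-x + y).2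

end Homology

namespace FreeGroup

variable {α : Type*} [DecidableEq α]

lemma norm_mk_singleton_mul {x : α × Bool} {g : FreeGroup α}
    (h : g.toWord.head? ≠ some (x.1, !x.2)) : (mk [x] * g).norm = g.norm + 1 := by
  have hred : IsReduced (x :: g.toWord) := by
    cases hg : g.toWord with
    | nil => exact IsReduced.singleton
    | cons y L =>
      refine isReduced_cons_cons.2 ⟨fun h1 => ?_, hg ▸ isReduced_toWord⟩
      obtain ⟨x₁, b⟩ := x
      obtain ⟨y₁, c⟩ := y
      subst h1
      rw [hg] at h
      cases b <;> cases c <;> simp_all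
  rw [norm, norm, ← mk_toWord (x := g), mul_mk, toWord_mk, List.singleton_append, hred.reduce_eq,
    List.length_cons, mk_toWord]

lemma toWord_head_of_norm_of_mul_le (t : α) {g : FreeGroup α} (h : (of t * g).norm ≤ g.norm) :
    g.toWord.head? = some (t, false) := by
  by_contra hne
  have := norm_mk_singleton_mul (x := (t, true)) hne
  rw [← of] at this
  omega

lemma toWord_head_of_norm_inv_of_mul_le (t : α) {g : FreeGroup α}
    (h : ((of t)⁻¹ * g).norm ≤ g.norm) : g.toWord.head? = some (t, true) := by
  by_contra hne
  have := norm_mk_singleton_mul (x := (t, false)) hne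
  rw [show mk [(t, false)] = (of t)⁻¹ from rfl] at this
  omega

end FreeGroup

lemma Fintype.eq_zero_of_sum_eq_zero_of_ne_zero_unique {ι M : Type*} [Fintype ι]
    [AddCommMonoid M] {c : ι → M} (hc : ∀ i j, c i ≠ 0 → c j ≠ 0 → i = j) (h : ∑ i, c i = 0)
    (i : ι) : c i = 0 := by
  by_contra hi
  rw [Fintype.sum_eq_single i fun j hj => not_not.1 fun hj' => hj (hc j i hj' hi)] at h
  exact hi h

open Finsupp in
/-- The augmentation ideal of `ℤ[F]` is free on the `of t - 1`, tensored here with `ℤ[Y]` for an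
`F`-set `Y` that has an equivariant map `f` to `F`. -/
theorem FreeGroup.eq_zero_of_sum_sub_mapDomain_eq_zero {α Y : Type*} [Fintype α]
    {σ : α → Y → Y} (hσ : ∀ t, Function.Injective (σ t)) (f : Y → FreeGroup α)
    (hf : ∀ t y, f (σ t y) = of t * f y) {γ : α → Y →₀ ℤ}
    (h : ∑ t, (γ t - (γ t).mapDomain (σ t)) = 0) : γ = 0 := by
  classical
  by_contra hne
  obtain ⟨t, y₀, hy₀⟩ : ∃ t y, γ t y ≠ 0 := by
    simpa [funext_iff, Finsupp.ext_iff] using hne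
  let T := Finset.univ.biUnion fun s => (γ s).support ∪ ((γ s).mapDomain (σ s)).support
  have hmemT : ∀ s y, γ s y ≠ 0 ∨ (γ s).mapDomain (σ s) y ≠ 0 → y ∈ T := fun s y hy =>
    Finset.mem_biUnion.2 ⟨s, Finset.mem_univ s, by simpa using hy⟩
  -- By maximality of `(f v).norm`, each nonzero term of the sum at `v` determines the first letter
  -- of `f v`, so at most one term survives.
  obtain ⟨v, hvT, hvmax⟩ := T.exists_max_image (fun y => (f y).norm) ⟨y₀, hmemT t y₀ (.inl hy₀)⟩
  have ha : ∀ s, γ s v ≠ 0 → (f v).toWord.head? = some (s, false) := fun s hs =>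
    toWord_head_of_norm_of_mul_le s <| hf s v ▸ hvmax _ <|
      hmemT s _ (.inr (by rwa [mapDomain_apply (hσ s)]))
  have hb : ∀ s, (γ s).mapDomain (σ s) v ≠ 0 → (f v).toWord.head? = some (s, true) := by
    intro s hs
    obtain ⟨w, rfl⟩ : v ∈ Set.range (σ s) :=
      by_contra fun hv => hs (mapDomain_of_notMem_range _ _ hv)
    rw [mapDomain_apply (hσ s)] at hs
    apply toWord_head_of_norm_inv_of_mul_le
    simpa only [hf, inv_mul_cancel_left] using hvmax _ (hmemT s w (.inl hs))
  have hzero := Fintype.eq_zero_of_sum_eq_zero_of_ne_zero_unique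
    (c := Sum.elim (fun s => γ s v) (fun s => -(γ s).mapDomain (σ s) v))
    (by
      rintro (s | s) (s' | s') hs hs' <;>
        simp only [Sum.elim_inl, Sum.elim_inr, ne_eq, neg_eq_zero] at hs hs'
      · simpa using (ha s hs).symm.trans (ha s' hs')
      · simpa using (ha s hs).symm.trans (hb s' hs')
      · simpa using (hb s hs).symm.trans (ha s' hs')
      · simpa using (hb s hs).symm.trans (hb s' hs'))
    (by simpa [Fintype.sum_sum_type, ← sub_eq_add_neg] using DFunLike.congr_fun h v)
  obtain ⟨s, -, hv⟩ := Finset.mem_biUnion.1 hvT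
  rcases Finset.mem_union.1 hv with hv | hv
  · exact mem_support_iff.1 hv (hzero (.inl s))
  · exact mem_support_iff.1 hv (neg_eq_zero.1 (hzero (.inr s)))

namespace FreeRack

abbrev FR (n : ℕ) : Type := FreeGroup (Fin n) × Fin n

variable {n : ℕ}

def lmul (u : FreeGroup (Fin n)) (p : FR n) : FR n := (u * p.1, p.2)

lemma lmul_one : lmul (1 : FreeGroup (Fin n)) = id := by
  funext p; simp [lmul]

lemma lmul_comp_lmul (u v : FreeGroup (Fin n)) : lmul u ∘ lmul v = lmul (u * v) := by
  funext p; simp [lmul, mul_assoc]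

lemma lmul_injective (u : FreeGroup (Fin n)) : Function.Injective (lmul u) := fun _ _ h =>
  Prod.ext (mul_left_cancel (congrArg Prod.fst h)) (congrArg Prod.snd h :)

lemma freeRackOp_eq_lmul (x : FR n) : freeRackOp n x = lmul (x.1 * FreeGroup.of x.2 * x.1⁻¹) :=
  rfl

lemma freeRackOp_one_gen (t : Fin n) : freeRackOp n (1, t) = lmul (FreeGroup.of t) := by
  simp [freeRackOp_eq_lmul]

lemma freeRackOp_lmul (u : FreeGroup (Fin n)) (a b : FR n) :
    freeRackOp n (lmul u a) (lmul u b) = lmul u (freeRackOp n a b) :=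
  Prod.ext (by simp only [freeRackOp, lmul]; group) rfl

lemma mapChains_lmul_sub_mem {k : ℕ} {S : AddSubgroup (CR (FR n) k)}
    (hS : ∀ t c, mapChains (lmul (FreeGroup.of t)) k c - c ∈ S) (u : FreeGroup (Fin n))
    (c : CR (FR n) k) : mapChains (lmul u) k c - c ∈ S := by
  induction u using FreeGroup.induction_on generalizing c with
  | C1 => simp [lmul_one, mapChains_id]
  | of t => exact hS t c
  | inv_of t ih =>
    have h := S.neg_mem (ih (mapChains (lmul (FreeGroup.of t)⁻¹) k c))
    rwa [mapChains_comp, lmul_comp_lmul, mul_inv_cancel, lmul_one, mapChains_id, neg_sub] at h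
  | mul u v ihu ihv =>
    have h := S.add_mem (ihu (mapChains (lmul v) k c)) (ihv c)
    rwa [mapChains_comp, lmul_comp_lmul, sub_add_sub_cancel] at h

noncomputable def splitHead (k : ℕ) : CR (FR n) (k+1) →+ (Fin n → CR (FR n) k) :=
  Finsupp.liftAddHom fun w =>
    zmultiplesHom _ (Pi.single (w 0).2 (mon (lmul (w 0).1⁻¹ ∘ Fin.tail w)))

noncomputable def consGen (k : ℕ) : (Fin n → CR (FR n) k) →+ CR (FR n) (k+1) :=
  ∑ t, (consHom (1, t) k).comp (Pi.evalAddMonoidHom _ t)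

noncomputable def genBoundary (k : ℕ) : (Fin n → CR (FR n) k) →+ CR (FR n) k :=
  ∑ t, (AddMonoidHom.id _ - mapChains (lmul (FreeGroup.of t)) k).comp (Pi.evalAddMonoidHom _ t)

lemma consGen_apply (k : ℕ) (γ : Fin n → CR (FR n) k) :
    consGen k γ = ∑ t, consHom (1, t) k (γ t) := by
  simp [consGen]

lemma genBoundary_apply (k : ℕ) (γ : Fin n → CR (FR n) k) :
    genBoundary k γ = ∑ t, (γ t - mapChains (lmul (FreeGroup.of t)) k (γ t)) := by
  simp [genBoundary]

lemma consGen_single (k : ℕ) (t : Fin n) (c : CR (FR n) k) :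
    consGen k (Pi.single t c) = consHom (1, t) k c := by
  rw [consGen_apply, Fintype.sum_eq_single t fun s hs => by simp [Pi.single_eq_of_ne hs]]
  simp

lemma genBoundary_single (k : ℕ) (t : Fin n) (c : CR (FR n) k) :
    genBoundary k (Pi.single t c) = c - mapChains (lmul (FreeGroup.of t)) k c := by
  rw [genBoundary_apply, Fintype.sum_eq_single t fun s hs => by simp [Pi.single_eq_of_ne hs]]
  simp

lemma splitHead_mon (k : ℕ) (w : Fin (k+1) → FR n) :
    splitHead k (mon w) = Pi.single (w 0).2 (mon (lmul (w 0).1⁻¹ ∘ Fin.tail w)) := by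
  simp [splitHead, mon]

lemma splitHead_consHom (k : ℕ) (x : FR n) (c : CR (FR n) k) :
    splitHead k (consHom x k c) = Pi.single x.2 (mapChains (lmul x.1⁻¹) k c) := by
  have : (splitHead k).comp (consHom x k)
      = (AddMonoidHom.single _ x.2).comp (mapChains (lmul x.1⁻¹) k) :=
    chainHom_ext fun w => by simp [consHom_mon, splitHead_mon, mapChains_mon]
  exact DFunLike.congr_fun this c

lemma splitHead_consGen (k : ℕ) (γ : Fin n → CR (FR n) k) : splitHead k (consGen k γ) = γ := by
  simp [consGen_apply, splitHead_consHom, lmul_one, mapChains_id, Finset.univ_sum_single]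


lemma d_consGen (k : ℕ) (γ : Fin n → CR (FR n) (k+1)) :
    d (freeRackOp n) (k+1) (consGen (k+1) γ)
      = genBoundary (k+1) γ - consGen k (fun t => d (freeRackOp n) k (γ t)) := by
  simp [consGen_apply, genBoundary_apply, d_consHom, freeRackOp_one_gen, Finset.sum_sub_distrib]

lemma d_genBoundary (k : ℕ) (γ : Fin n → CR (FR n) (k+1)) :
    d (freeRackOp n) k (genBoundary (k+1) γ)
      = genBoundary k (fun t => d (freeRackOp n) k (γ t)) := by
  simp [genBoundary_apply, d_mapChains _ (freeRackOp_lmul _)]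

lemma splitHead_mapChains_lmul (k : ℕ) (u : FreeGroup (Fin n)) (c : CR (FR n) (k+1)) :
    splitHead k (mapChains (lmul u) (k+1) c) = splitHead k c := by
  have : (splitHead k).comp (mapChains (lmul u) (k+1)) = splitHead k :=
    chainHom_ext fun w => by
      simp only [AddMonoidHom.comp_apply, mapChains_mon, splitHead_mon, Function.comp_apply]
      congr 2
      funext j
      simp [lmul, Fin.tail, mul_assoc]
  exact DFunLike.congr_fun this c

lemma splitHead_d (k : ℕ) (c : CR (FR n) (k+2)) (t : Fin n) :
    splitHead k (d (freeRackOp n) (k+1) c) t = -d (freeRackOp n) k (splitHead (k+1) c t) := by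
  have : (Pi.evalAddMonoidHom _ t).comp ((splitHead k).comp (d (freeRackOp n) (k+1)))
      = -(d (freeRackOp n) k).comp ((Pi.evalAddMonoidHom _ t).comp (splitHead (k+1))) := by
    refine chainHom_ext fun w => ?_
    obtain ⟨x, w, rfl⟩ : ∃ x w, _ = Fin.cons x w := ⟨w 0, Fin.tail w, (Fin.cons_self_tail w).symm⟩
    have hcancel : splitHead k (mon (freeRackOp n x ∘ w)) = splitHead k (mon w) := by
      rw [freeRackOp_eq_lmul, ← mapChains_mon, splitHead_mapChains_lmul]
    simp only [AddMonoidHom.comp_apply, d_mon, dMon_cons, map_sub, hcancel, sub_self, zero_sub,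
      splitHead_consHom, splitHead_mon, Fin.cons_zero, Fin.tail_cons, AddMonoidHom.neg_apply,
      Pi.evalAddMonoidHom_apply, Pi.neg_apply, Pi.single_apply]
    split_ifs
    · rw [← dMon_comp _ (freeRackOp_lmul _), d_mon]
    · simp
  exact DFunLike.congr_fun this c

lemma sub_consGen_splitHead_mem_range (k : ℕ) (c : CR (FR n) (k+1)) :
    c - consGen k (splitHead k c) ∈ (genBoundary (k+1)).range := by
  refine map_mem_of_forall_mon (AddMonoidHom.id _ - (consGen k).comp (splitHead k)) (fun w => ?_) c
  have hw : mon w = mapChains (lmul (w 0).1) (k+1)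
      (mon (Fin.cons (1, (w 0).2) (lmul (w 0).1⁻¹ ∘ Fin.tail w))) := by
    rw [mapChains_mon]
    congr 1
    funext j
    cases j using Fin.cases <;> simp [lmul, Fin.tail]
  have hgen : ∀ (t : Fin n) (c : CR (FR n) (k+1)),
      mapChains (lmul (FreeGroup.of t)) (k+1) c - c ∈ (genBoundary (k+1)).range :=
    fun t c => ⟨-Pi.single t c, by rw [map_neg, genBoundary_single, neg_sub]⟩
  simp only [AddMonoidHom.sub_apply, AddMonoidHom.id_apply, AddMonoidHom.comp_apply, splitHead_mon,
    consGen_single, consHom_mon]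
  rw [hw]
  exact mapChains_lmul_sub_mem hgen _ _

lemma genBoundary_injective (k : ℕ) : Function.Injective (genBoundary (n := n) (k+1)) := by
  refine (injective_iff_map_eq_zero _).2 fun γ hγ => ?_
  refine FreeGroup.eq_zero_of_sum_sub_mapDomain_eq_zero (σ := fun t w => lmul (FreeGroup.of t) ∘ w)
    (fun _ _ _ h => funext fun j => lmul_injective _ (congrFun h j)) (fun w => (w 0).1)
    (fun _ _ => rfl) ?_
  simpa [genBoundary_apply, mapChains_eq_mapDomain] using hγ

lemma mem_range_d_of_d_eq_zero (k : ℕ) (z : CR (FR n) (k+2)) (hz : d (freeRackOp n) (k+1) z = 0) :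
    z ∈ (d (freeRackOp n) (k+2)).range := by
  set β := splitHead (k+1) z
  have hβ : (fun t => d (freeRackOp n) k (β t)) = 0 := by
    funext t
    simpa [hz] using (splitHead_d k z t).symm
  obtain ⟨v, hv⟩ := sub_consGen_splitHead_mem_range (k+1) z
  have hdv : (fun t => d (freeRackOp n) (k+1) (v t)) = -β := by
    apply genBoundary_injective k
    have := congrArg (d (freeRackOp n) (k+1)) hv
    rw [d_genBoundary, map_sub, hz, d_consGen, hβ] at this
    simpa [neg_sub, map_neg] using this
  refine ⟨consGen (k+2) v, ?_⟩
  rw [d_consGen, hdv, map_neg, hv]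
  abel

lemma ker_splitHead_zero : (splitHead (n := n) 0).ker = BC (freeRackOp n) 1 := by
  ext c
  constructor
  · intro hc
    obtain ⟨v, hv⟩ := sub_consGen_splitHead_mem_range 0 c
    refine ⟨consGen 1 v, ?_⟩
    rw [d_consGen, d_zero, hv, (AddMonoidHom.mem_ker).1 hc]
    simp [← Pi.zero_def]
  · rintro ⟨b, rfl⟩
    ext t : 1
    simp [splitHead_d, d_zero]

noncomputable def hrOneEquiv : HR (FR n) (freeRackOp n) 1 ≃+ (Fin n → ℤ) :=
  (hrEquivOfSurjective _ (ZC_one_eq_top _) (splitHead 0)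
    (fun γ => ⟨consGen 0 γ, splitHead_consGen 0 γ⟩) ker_splitHead_zero).trans
    (AddEquiv.piCongrRight fun _ => chainsZeroEquiv)

end FreeRack

/-- The free rack on `n` generators has `HR_0 ≅ ℤ`, `HR_1 ≅ ℤ^n`, and `HR_m = 0` for
`m ≥ 2`. -/
theorem free_rack_homology (n : ℕ) :
    Nonempty (HR (FreeGroup (Fin n) × Fin n) (freeRackOp n) 0 ≃+ ℤ) ∧
      Nonempty (HR (FreeGroup (Fin n) × Fin n) (freeRackOp n) 1 ≃+ (Fin n → ℤ)) ∧
      ∀ m : ℕ, 2 ≤ m → Subsingleton (HR (FreeGroup (Fin n) × Fin n) (freeRackOp n) m) := by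
  refine ⟨⟨hrZeroEquiv _⟩, ⟨FreeRack.hrOneEquiv⟩, fun m hm => ?_⟩
  obtain ⟨k, rfl⟩ := Nat.exists_eq_add_of_le' hm
  exact subsingleton_HR_succ _ (FreeRack.mem_range_d_of_d_eq_zero k)
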